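/- arXiv:2306.10706 — 5 statements merged into one kernel-verified Lean document; each statement's English description precedes it below -/
import Mathlib

section
/- Let p ≠ 0. The function H(x,y) = (x - y)^p (x + y)^{-p} (1 + p y²) is a first integral of the system ẋ = x - x²y + pxy² + y³, ẏ = y + py³ on any open region where x - y > 0 and x + y > 0: namely H_x·(x - x²y + pxy² + y³) + H_y·(y + py³) = 0 there. -/
/-! Write `H = G · (1 + p y²)` with `G = (x - y)^p (x + y)^(-p)`. The logarithmic derivative of `G`
is rational, `∂ₓG = G · 2p y / (x² - y²)` and `∂ᵧG = -G · 2p x / (x² - y²)`, so the claim reduces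
to a polynomial identity: the `G`-derivative terms contribute `-2p y² (1 + p y²) G`, exactly
cancelled by `G · ∂ᵧ(1 + p y²) · (y + p y³) = 2p y² (1 + p y²) G`. -/

open Real

theorem HasDerivAt.rpow_mul_rpow_neg {f g : ℝ → ℝ} {f' g' x : ℝ} (p : ℝ)
    (hf : HasDerivAt f f' x) (hg : HasDerivAt g g' x) (hfx : 0 < f x) (hgx : 0 < g x) :
    HasDerivAt (fun t => f t ^ p * g t ^ (-p))
      (p * (f x ^ p * g x ^ (-p)) * (f' / f x - g' / g x)) x := by
  refine ((hf.rpow_const (p := p) (Or.inl hfx.ne')).mul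
    (hg.rpow_const (p := -p) (Or.inl hgx.ne'))).congr_deriv ?_
  rw [rpow_sub_one hfx.ne', rpow_sub_one hgx.ne']
  ring

theorem first_integral_H_general (p : ℝ) (x y : ℝ)
    (h1 : x - y > 0) (h2 : x + y > 0) :
    deriv (fun x' : ℝ => (x' - y) ^ p * (x' + y) ^ (-p) * (1 + p * y ^ 2)) x *
        (x - x ^ 2 * y + p * x * y ^ 2 + y ^ 3) +
      deriv (fun y' : ℝ => (x - y') ^ p * (x + y') ^ (-p) * (1 + p * y' ^ 2)) y *
        (y + p * y ^ 3) = 0 := by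
  have hx := (((hasDerivAt_id' x).sub_const y).rpow_mul_rpow_neg p
    ((hasDerivAt_id' x).add_const y) h1 h2).mul_const (1 + p * y ^ 2)
  have hy : HasDerivAt (fun y' => (x - y') ^ p * (x + y') ^ (-p) * (1 + p * y' ^ 2)) _ y :=
    (((hasDerivAt_id' y).const_sub x).rpow_mul_rpow_neg p
      ((hasDerivAt_id' y).const_add x) h1 h2).mul
      (((hasDerivAt_pow 2 y).const_mul p).const_add 1)
  rw [hx.deriv, hy.deriv]
  field_simp
  ring

theorem first_integral_H (p : ℝ) (hp : p ≠ 0) (x y : ℝ)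
    (h1 : x - y > 0) (h2 : x + y > 0) :
    deriv (fun x' : ℝ => (x' - y) ^ p * (x' + y) ^ (-p) * (1 + p * y ^ 2)) x *
        (x - x ^ 2 * y + p * x * y ^ 2 + y ^ 3) +
      deriv (fun y' : ℝ => (x - y') ^ p * (x + y') ^ (-p) * (1 + p * y' ^ 2)) y *
        (y + p * y ^ 3) = 0 :=
  first_integral_H_general p x y h1 h2
end

section
/- The function H₀(x,y) = ((x - y)/(x + y))·exp(y²) is a first integral of the system ẋ = x - x²y + y³, ẏ = y on the region x + y ≠ 0: H₀_x·(x - x²y + y³) + H₀_y·y = 0 there. -/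
theorem first_integral_H0 (x y : ℝ) (h : x + y ≠ 0) :
    deriv (fun x' : ℝ => (x' - y) / (x' + y) * Real.exp (y ^ 2)) x *
        (x - x ^ 2 * y + y ^ 3) +
      deriv (fun y' : ℝ => (x - y') / (x + y') * Real.exp (y' ^ 2)) y * y = 0 := by
  have hx : HasDerivAt (fun x' : ℝ => (x' - y) / (x' + y) * Real.exp (y ^ 2))
      (((1 * (x + y) - (x - y) * 1) / (x + y) ^ 2) * Real.exp (y ^ 2)) x := by
    exact (((hasDerivAt_id x).sub_const y).div ((hasDerivAt_id x).add_const y) h).mul_const _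
  have hy : HasDerivAt (fun y' : ℝ => (x - y') / (x + y') * Real.exp (y' ^ 2))
      (((-1 * (x + y) - (x - y) * 1) / (x + y) ^ 2) * Real.exp (y ^ 2) +
        (x - y) / (x + y) * (Real.exp (y ^ 2) * (2 * y))) y := by
    have h1 : HasDerivAt (fun y' : ℝ => (x - y') / (x + y'))
        ((-1 * (x + y) - (x - y) * 1) / (x + y) ^ 2) y := by
      exact ((hasDerivAt_id y).const_sub x |>.div ((hasDerivAt_id y).const_add x) h)
    have h2 : HasDerivAt (fun y' : ℝ => Real.exp (y' ^ 2)) (Real.exp (y ^ 2) * (2 * y)) y := by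
      have := ((hasDerivAt_pow 2 y)).exp
      simpa [mul_comm] using this
    exact h1.mul h2
  rw [hx.deriv, hy.deriv]
  have he := Real.exp_ne_zero (y ^ 2)
  field_simp
  ring
end

section
/- H₀ is constant along solutions of ẋ = x - x²y + y³, ẏ = y, i.e. for any solution (x(t), y(t)) with x(t) + y(t) ≠ 0, the function t ↦ ((x(t) - y(t))/(x(t) + y(t)))·exp(y(t)²) is constant. -/
theorem H0_constant_along_solutions (x y : ℝ → ℝ)
    (hx : ∀ t, HasDerivAt x (x t - (x t) ^ 2 * y t + (y t) ^ 3) t)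
    (hy : ∀ t, HasDerivAt y (y t) t)
    (h : ∀ t, x t + y t ≠ 0) :
    ∀ t₁ t₂ : ℝ,
      (x t₁ - y t₁) / (x t₁ + y t₁) * Real.exp ((y t₁) ^ 2) =
      (x t₂ - y t₂) / (x t₂ + y t₂) * Real.exp ((y t₂) ^ 2) := by
  set H : ℝ → ℝ := fun t => (x t - y t) / (x t + y t) * Real.exp ((y t) ^ 2) with hH
  have key : ∀ t, HasDerivAt H 0 t := by
    intro t
    have hx' := hx t
    have hy' := hy t
    have hnum : HasDerivAt (fun t => x t - y t)
        ((x t - (x t) ^ 2 * y t + (y t) ^ 3) - y t) t := hx'.sub hy'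
    have hden : HasDerivAt (fun t => x t + y t)
        ((x t - (x t) ^ 2 * y t + (y t) ^ 3) + y t) t := hx'.add hy'
    have hdiv := hnum.div hden (h t)
    have hsq : HasDerivAt (fun t => (y t) ^ 2) (2 * (y t) ^ 1 * y t) t := hy'.pow 2
    have hexp := hsq.exp
    have hmul := hdiv.mul hexp
    refine hmul.congr_deriv (Eq.symm ?_)
    have ht := h t
    simp only [Pi.div_apply]
    field_simp
    ring
  have hdiff : Differentiable ℝ H := fun t => (key t).differentiableAt
  have hderiv : ∀ t, deriv H t = 0 := fun t => (key t).deriv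
  intro t₁ t₂
  exact is_const_of_deriv_eq_zero hdiff hderiv t₁ t₂
end

section
/- For p < 0, the Jacobian matrix of the vector field (x - x²y + pxy² + y³, y + py³) at the singular point (1/√(-p), 1/√(-p)) has two negative real eigenvalues (the point is a hyperbolic stable node). -/
/-! At `a = 1/√(-p)` we have `p a² = -1`. The second component does not depend on `x`, so the
Jacobian is upper triangular and its eigenvalues are the diagonal entries
`1 - 2a² + p a² = -2a²` and `1 + 3p a² = -2`. -/

open Polynomial

theorem Matrix.charpoly_fin_two_of_lower_eq_zero {R : Type*} [CommRing R] (a b d : R) :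
    (!![a, b; 0, d]).charpoly = (X - C a) * (X - C d) := by
  rw [Matrix.charpoly_of_isUpperTriangular, Fin.prod_univ_two]
  · rfl
  · intro i j hji
    fin_cases i <;> fin_cases j <;> simp_all

theorem deriv_fst_component (p x y : ℝ) :
    deriv (fun x' : ℝ => x' - x' ^ 2 * y + p * x' * y ^ 2 + y ^ 3) x =
      1 - 2 * x * y + p * y ^ 2 :=
  HasDerivAt.deriv <| ((((hasDerivAt_id' x).sub ((hasDerivAt_pow 2 x).mul_const y)).add
    (((hasDerivAt_id' x).const_mul p).mul_const (y ^ 2))).add_const (y ^ 3)).congr_deriv (by ring)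

theorem deriv_snd_component (p y : ℝ) :
    deriv (fun y' : ℝ => y' + p * y' ^ 3) y = 1 + 3 * p * y ^ 2 :=
  HasDerivAt.deriv <| ((hasDerivAt_id' y).add ((hasDerivAt_pow 3 y).const_mul p)).congr_deriv
    (by push_cast; ring)

theorem mul_sq_one_div_sqrt_neg {p : ℝ} (hp : p < 0) : p * (1 / √(-p)) ^ 2 = -1 := by
  rw [div_pow, Real.sq_sqrt (by linarith)]
  field_simp
  simp [hp.ne]

open Polynomial in
theorem stable_node_p_neg (p : ℝ) (hp : p < 0) :
    ∃ l₁ l₂ : ℝ, l₁ < 0 ∧ l₂ < 0 ∧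
      (Matrix.charpoly
        (let a : ℝ := 1 / Real.sqrt (-p);
         !![deriv (fun x' : ℝ => x' - x' ^ 2 * a + p * x' * a ^ 2 + a ^ 3) a,
            deriv (fun y' : ℝ => a - a ^ 2 * y' + p * a * y' ^ 2 + y' ^ 3) a;
            deriv (fun x' : ℝ => a + p * a ^ 3) a,
            deriv (fun y' : ℝ => y' + p * y' ^ 3) a]) =
        (X - C l₁) * (X - C l₂)) := by
  set a : ℝ := 1 / √(-p)
  have hpa : p * a ^ 2 = -1 := mul_sq_one_div_sqrt_neg hp
  refine ⟨1 - 2 * a * a + p * a ^ 2, 1 + 3 * p * a ^ 2, by nlinarith, by linarith, ?_⟩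
  simp only [deriv_fst_component, deriv_snd_component, deriv_const]
  exact Matrix.charpoly_fin_two_of_lower_eq_zero _ _ _
end

section
/- For p < 0, the Jacobian matrix of the vector field (x - x²y + pxy² + y³, y + py³) at the singular point (1/√(-p), -1/√(-p)) has one positive and one negative real eigenvalue (the point is a hyperbolic saddle), equivalently its determinant is negative. -/
/-! The second component of the field does not involve `x`, so the Jacobian is upper triangular
and its eigenvalues are its diagonal entries. At a singular point `(a, -a)` with `p a² = -1`
these are `2 a² > 0` and `1 + 3 p a² = -2 < 0`. -/

open Polynomial in
theorem Matrix.charpoly_upperTriangular_fin_two {R : Type*} [CommRing R] (d₁ c d₂ : R) :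
    (!![d₁, c; 0, d₂] : Matrix (Fin 2) (Fin 2) R).charpoly = (X - C d₁) * (X - C d₂) := by
  simp [Matrix.charpoly, Matrix.det_fin_two]

noncomputable def saddleFieldJacobian (p a b : ℝ) : Matrix (Fin 2) (Fin 2) ℝ :=
  !![deriv (fun x : ℝ => x - x ^ 2 * b + p * x * b ^ 2 + b ^ 3) a,
     deriv (fun y : ℝ => a - a ^ 2 * y + p * a * y ^ 2 + y ^ 3) b;
     deriv (fun _ : ℝ => b + p * b ^ 3) a,
     deriv (fun y : ℝ => y + p * y ^ 3) b]

theorem saddleFieldJacobian_eq (p a b : ℝ) :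
    saddleFieldJacobian p a b =
      !![1 - 2 * a * b + p * b ^ 2, -a ^ 2 + 2 * p * a * b + 3 * b ^ 2; 0, 1 + 3 * p * b ^ 2] := by
  have d₁₁ : deriv (fun x : ℝ => x - x ^ 2 * b + p * x * b ^ 2 + b ^ 3) a =
      1 - 2 * a * b + p * b ^ 2 := by
    refine ((((hasDerivAt_id' a).sub ((hasDerivAt_pow 2 a).mul_const b)).add
      (((hasDerivAt_id' a).const_mul p).mul_const (b ^ 2))).add_const (b ^ 3)).deriv.trans ?_
    norm_num
  have d₁₂ : deriv (fun y : ℝ => a - a ^ 2 * y + p * a * y ^ 2 + y ^ 3) b =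
      -a ^ 2 + 2 * p * a * b + 3 * b ^ 2 := by
    refine (((((hasDerivAt_id' b).const_mul (a ^ 2)).const_sub a).add
      ((hasDerivAt_pow 2 b).const_mul (p * a))).add (hasDerivAt_pow 3 b)).deriv.trans ?_
    norm_num; ring
  have d₂₂ : deriv (fun y : ℝ => y + p * y ^ 3) b = 1 + 3 * p * b ^ 2 := by
    refine ((hasDerivAt_id' b).add ((hasDerivAt_pow 3 b).const_mul p)).deriv.trans ?_
    norm_num; ring
  rw [saddleFieldJacobian, d₁₁, d₁₂, d₂₂, deriv_const]

theorem saddleFieldJacobian_neg_of_mul_sq_eq_neg_one {p a : ℝ} (ha : p * a ^ 2 = -1) :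
    saddleFieldJacobian p a (-a) = !![2 * a ^ 2, 2 * a ^ 2 + 2; 0, -2] := by
  have e₁₁ : 1 - 2 * a * -a + p * (-a) ^ 2 = 2 * a ^ 2 := by linear_combination ha
  have e₁₂ : -a ^ 2 + 2 * p * a * -a + 3 * (-a) ^ 2 = 2 * a ^ 2 + 2 := by
    linear_combination -2 * ha
  have e₂₂ : 1 + 3 * p * (-a) ^ 2 = -2 := by linear_combination 3 * ha
  rw [saddleFieldJacobian_eq, e₁₁, e₁₂, e₂₂]

open Polynomial in
theorem saddle_p_neg (p : ℝ) (hp : p < 0) :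
    ∃ l₁ l₂ : ℝ, 0 < l₁ ∧ l₂ < 0 ∧
      (Matrix.charpoly
        (let a : ℝ := 1 / Real.sqrt (-p); let b : ℝ := -(1 / Real.sqrt (-p));
         !![deriv (fun x' : ℝ => x' - x' ^ 2 * b + p * x' * b ^ 2 + b ^ 3) a,
            deriv (fun y' : ℝ => a - a ^ 2 * y' + p * a * y' ^ 2 + y' ^ 3) b;
            deriv (fun x' : ℝ => b + p * b ^ 3) a,
            deriv (fun y' : ℝ => y' + p * y' ^ 3) b]) =
        (X - C l₁) * (X - C l₂)) ∧
      Matrix.det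
        (let a : ℝ := 1 / Real.sqrt (-p); let b : ℝ := -(1 / Real.sqrt (-p));
         !![deriv (fun x' : ℝ => x' - x' ^ 2 * b + p * x' * b ^ 2 + b ^ 3) a,
            deriv (fun y' : ℝ => a - a ^ 2 * y' + p * a * y' ^ 2 + y' ^ 3) b;
            deriv (fun x' : ℝ => b + p * b ^ 3) a,
            deriv (fun y' : ℝ => y' + p * y' ^ 3) b]) < 0 := by
  change ∃ l₁ l₂ : ℝ, 0 < l₁ ∧ l₂ < 0 ∧
    (saddleFieldJacobian p (1 / √(-p)) (-(1 / √(-p)))).charpoly = (X - C l₁) * (X - C l₂) ∧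
    (saddleFieldJacobian p (1 / √(-p)) (-(1 / √(-p)))).det < 0
  have hs : 0 < √(-p) := Real.sqrt_pos.mpr (neg_pos.mpr hp)
  have ha : p * (1 / √(-p)) ^ 2 = -1 := by
    rw [div_pow, Real.sq_sqrt (neg_nonneg.mpr hp.le)]
    field_simp [hp.ne]
  rw [saddleFieldJacobian_neg_of_mul_sq_eq_neg_one ha, Matrix.det_fin_two_of]
  have hl₁ : 0 < 2 * (1 / √(-p)) ^ 2 := by positivity
  exact ⟨_, -2, hl₁, by norm_num, Matrix.charpoly_upperTriangular_fin_two _ _ _, by linarith⟩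
end
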